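/- Let $m \geq 5$ with $m \equiv 2 \pmod 3$ and let $P_m$ be the vertex set of a regular $m$-gon inscribed in the unit circle with the geodesic metric. Then for every partition of $P_m$ into three nonempty subsets $X_1, X_2, X_3$, we have $\max_i \operatorname{diam} X_i \geq \frac{2\pi}{3} - \frac{4\pi}{3m}$, and this bound is attained by some partition. -/

import Mathlib

open Real

/-- Vertex set of the regular `n`-gon inscribed in the unit circle, modeled inside
`AddCircle (2π)` whose quotient metric is exactly the geodesic metric
`d(α,β) = min (|α-β|) (2π - |α-β|)`. -/
noncomputable def Pvert (n : ℕ) : Set (AddCircle (2 * π)) :=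
  Set.range fun j : Fin n => ((2 * π * j / n : ℝ) : AddCircle (2 * π))

instance (n : ℕ) : Finite (Pvert n) := by unfold Pvert; exact (Set.finite_range _).to_subtype

/-!
Write `ε = 2π/m`. The vertices form the cyclic subgroup of `ℝ/2πℤ` generated by `ε`, and the
distance between `iε` and `jε` (`j ≤ i < m`) is `min (i - j) (m - (i - j)) · ε`. If a set `A` of
vertices has all distances `< kε` with `k = ⌊m/3⌋`, then its translates by `0`, `kε` and `2kε` are
pairwise disjoint sets of vertices, so `3|A| ≤ m`, hence `3|A| < m` because `3 ∤ m`; three such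
sets cannot cover the `m` vertices. For `m = 3k + 2`, the arcs of `k + 1`, `k + 1` and `k`
consecutive vertices have diameter exactly `kε`.
-/

open Set Function Pointwise

section Translates

variable {G ι : Type*} [SeminormedAddCommGroup G]

theorem pairwise_disjoint_vadd_of_dist_lt {A : Set G} {r : ℝ} {c : ι → G}
    (hA : ∀ x ∈ A, ∀ y ∈ A, dist x y < r) (hc : Pairwise fun i j => r ≤ ‖c i - c j‖) :
    Pairwise (Disjoint on fun i => c i +ᵥ A) := by
  intro i j hij
  refine Set.disjoint_left.2 ?_
  rintro _ ⟨a, ha, rfl⟩ ⟨b, hb, hab⟩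
  have hdiff : c i - c j = b - a := by
    simp only [vadd_eq_add] at hab
    linear_combination (norm := abel) -hab
  have := hA b hb a ha
  rw [dist_eq_norm, ← hdiff] at this
  exact (hc hij).not_gt this

theorem card_mul_ncard_le_of_dist_lt [Fintype ι] {S : AddSubgroup G} [Finite S] {A : Set G}
    {r : ℝ} {c : ι → G} (hAS : A ⊆ S) (hcS : ∀ i, c i ∈ S)
    (hA : ∀ x ∈ A, ∀ y ∈ A, dist x y < r) (hc : Pairwise fun i j => r ≤ ‖c i - c j‖) :
    Fintype.card ι * A.ncard ≤ Nat.card S := by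
  have hA_fin : A.Finite := (S : Set G).toFinite.subset hAS
  have hunion : (⋃ i, c i +ᵥ A).ncard = Fintype.card ι * A.ncard := by
    rw [ncard_iUnion_of_finite (fun i => hA_fin.vadd_set)
      (pairwise_disjoint_vadd_of_dist_lt hA hc)]
    simp [finsum_eq_sum_of_fintype, ncard_vadd_set]
  rw [← hunion, ← Nat.card_coe_set_eq]
  refine ncard_le_ncard ?_ (S : Set G).toFinite
  rintro _ ⟨_, ⟨i, rfl⟩, a, ha, rfl⟩
  exact S.add_mem (hcS i) (hAS ha)

end Translates

namespace AddCircle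

theorem coe_mul_div_eq_nsmul (p : ℝ) (m j : ℕ) :
    ((p * j / m : ℝ) : AddCircle p) = j • ((p / m : ℝ) : AddCircle p) := by
  rw [← coe_nsmul, nsmul_eq_mul]
  ring_nf

variable {p : ℝ} [Fact (0 < p)]

theorem norm_nsmul_coe_div {m n : ℕ} (hnm : n ≤ m) :
    ‖n • ((p / m : ℝ) : AddCircle p)‖ = (min n (m - n) : ℕ) * (p / m) := by
  have hmin : min (n % m) (m - n % m) = min n (m - n) := by
    rcases hnm.lt_or_eq with hlt | rfl
    · rw [Nat.mod_eq_of_lt hlt]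
    · simp
  rw [← natCast_div_mul_eq_nsmul, norm_div_natCast, hmin]
  ring

end AddCircle

theorem Nat.sub_le_of_div_eq_div {a b d : ℕ} (h : a / (d + 1) = b / (d + 1)) : a - b ≤ d := by
  have ha := Nat.lt_div_mul_add (a := a) (b := d + 1) (by omega)
  have hb := Nat.div_mul_le_self b (d + 1)
  rw [h] at ha
  omega

instance : Fact (0 < 2 * π) := ⟨two_pi_pos⟩

namespace Pvert

theorem eq_zmultiples {m : ℕ} (hm : 0 < m) :
    Pvert m = AddSubgroup.zmultiples ((2 * π / m : ℝ) : AddCircle (2 * π)) := by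
  classical
  ext x
  have hfin : IsOfFinAddOrder ((2 * π / m : ℝ) : AddCircle (2 * π)) := by
    rw [← addOrderOf_pos_iff, AddCircle.addOrderOf_period_div hm]; exact hm
  rw [SetLike.mem_coe, hfin.mem_zmultiples_iff_mem_range_addOrderOf,
    AddCircle.addOrderOf_period_div hm]
  simp [Pvert, AddCircle.coe_mul_div_eq_nsmul, Fin.exists_iff]

theorem ncard_eq {m : ℕ} (hm : 0 < m) : (Pvert m).ncard = m := by
  rw [eq_zmultiples hm, ← Nat.card_coe_set_eq, SetLike.coe_sort_coe, Nat.card_zmultiples,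
    AddCircle.addOrderOf_period_div hm]

noncomputable def finEquiv {m : ℕ} (hm : 0 < m) : Fin m ≃ Pvert m :=
  Equiv.ofBijective
    (fun j => ⟨(j : ℕ) • ((2 * π / m : ℝ) : AddCircle (2 * π)), j,
      AddCircle.coe_mul_div_eq_nsmul _ m j⟩)
    ⟨fun i j hij => Fin.ext <| nsmul_injOn_Iio_addOrderOf
        (by simp [AddCircle.addOrderOf_period_div hm])
        (by simp [AddCircle.addOrderOf_period_div hm]) (congrArg Subtype.val hij),
      by rintro ⟨_, j, rfl⟩; exact ⟨j, Subtype.ext (AddCircle.coe_mul_div_eq_nsmul _ m j).symm⟩⟩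

theorem coe_finEquiv {m : ℕ} (hm : 0 < m) (j : Fin m) :
    (finEquiv hm j : AddCircle (2 * π)) =
      (j : ℕ) • ((2 * π / m : ℝ) : AddCircle (2 * π)) :=
  rfl

theorem dist_finEquiv {m : ℕ} (hm : 0 < m) {i j : Fin m} (hji : j ≤ i) :
    dist (finEquiv hm i) (finEquiv hm j) =
      (min (i - j : ℕ) (m - (i - j)) : ℕ) * (2 * π / m) := by
  rw [Subtype.dist_eq, dist_eq_norm, coe_finEquiv, coe_finEquiv, sub_eq_add_neg,
    ← sub_nsmul _ hji, AddCircle.norm_nsmul_coe_div (by omega)]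

theorem mul_ncard_le_of_dist_lt {m n k : ℕ} (hm : 0 < m) (hnk : n * k ≤ m)
    {A : Set (AddCircle (2 * π))} (hA : A ⊆ Pvert m)
    (hd : ∀ x ∈ A, ∀ y ∈ A, dist x y < k * (2 * π / m)) : n * A.ncard ≤ m := by
  have hS := eq_zmultiples hm
  have : Finite (AddSubgroup.zmultiples ((2 * π / m : ℝ) : AddCircle (2 * π))) := by
    rw [← SetLike.coe_sort_coe, ← hS]; infer_instance
  have key := card_mul_ncard_le_of_dist_lt (hS ▸ hA)
    (c := fun i : Fin n => ((i : ℕ) * k) • ((2 * π / m : ℝ) : AddCircle (2 * π)))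
    (fun i => AddSubgroup.nsmul_mem _ (AddSubgroup.mem_zmultiples _) _) hd ?_
  · simpa [Nat.card_zmultiples, AddCircle.addOrderOf_period_div hm] using key
  intro i j hij
  wlog hlt : j < i generalizing i j
  · rw [norm_sub_rev]; exact this hij.symm (by omega)
  have hgap : (i - j + 1 : ℕ) * k ≤ m := (Nat.mul_le_mul_right k (by omega)).trans hnk
  rw [add_mul, one_mul] at hgap
  rw [sub_eq_add_neg, ← sub_nsmul _ (Nat.mul_le_mul_right k hlt.le), ← Nat.sub_mul,
    AddCircle.norm_nsmul_coe_div (by omega)]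
  gcongr
  exact le_min (Nat.le_mul_of_pos_left k (by omega)) (by omega)

theorem div_mul_le_iSup_diam {m n : ℕ} (hnm : ¬n ∣ m) (X : Fin n → Set (Pvert m))
    (hX : ⋃ i, X i = univ) : (m / n : ℕ) * (2 * π / m) ≤ ⨆ i, Metric.diam (X i) := by
  have hm : 0 < m := Nat.pos_of_ne_zero (by rintro rfl; exact hnm (dvd_zero n))
  by_contra! hlt
  set Y : Fin n → Set (AddCircle (2 * π)) := fun i => (↑) '' X i
  have hsmall : ∀ i, n * (Y i).ncard < m := by
    intro i
    refine (mul_ncard_le_of_dist_lt hm (Nat.mul_div_le m n) ?_ ?_).lt_of_ne ?_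
    · exact (image_subset_range _ _).trans Subtype.range_coe.subset
    · rintro _ ⟨a, ha, rfl⟩ _ ⟨b, hb, rfl⟩
      calc dist (a : AddCircle (2 * π)) b = dist a b := rfl
        _ ≤ Metric.diam (X i) := Metric.dist_le_diam_of_mem (X i).toFinite.isBounded ha hb
        _ ≤ ⨆ j, Metric.diam (X j) :=
          le_ciSup (f := fun j => Metric.diam (X j)) (Finite.bddAbove_range _) i
        _ < _ := hlt
    · exact fun h => hnm ⟨_, h.symm⟩
  have hcover : m ≤ ∑ i, (Y i).ncard := calc
    m = (⋃ i, Y i).ncard := by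
      rw [← image_iUnion, hX, image_univ, Subtype.range_coe, ncard_eq hm]
    _ ≤ ∑ i, (Y i).ncard := ncard_iUnion_le_of_fintype Y
  have hn : 0 < n := Nat.pos_of_ne_zero (by rintro rfl; simp at hcover; omega)
  have : n * m < n * m := calc
    n * m ≤ ∑ i, n * (Y i).ncard := by rw [← Finset.mul_sum]; exact Nat.mul_le_mul_left n hcover
    _ < ∑ _i : Fin n, m :=
      Finset.sum_lt_sum_of_nonempty ⟨⟨0, hn⟩, Finset.mem_univ _⟩ fun i _ => hsmall i
    _ = n * m := by simp
  exact this.false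

theorem exists_partition_iSup_diam_eq {m k : ℕ} (hmk : m = 3 * k + 2) (hk : 1 ≤ k) :
    ∃ X : Fin 3 → Set (Pvert m), (∀ i, (X i).Nonempty) ∧ Pairwise (onFun Disjoint X) ∧
      ⋃ i, X i = univ ∧ ⨆ i, Metric.diam (X i) = k * (2 * π / m) := by
  have hm : 0 < m := by omega
  let e := finEquiv hm
  let block : Fin m → Fin 3 := fun j => ⟨j / (k + 1), Nat.div_lt_of_lt_mul (by omega)⟩
  let X : Fin 3 → Set (Pvert m) := fun i => (block ∘ e.symm) ⁻¹' {i}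
  have hmem : ∀ i j, e j ∈ X i ↔ (j : ℕ) / (k + 1) = i := by simp [X, block, Fin.ext_iff]
  refine ⟨X, fun i => ?_, pairwise_disjoint_fiber _, ?_, le_antisymm (ciSup_le fun i => ?_) ?_⟩
  · have hi : (i : ℕ) * (k + 1) < m := by
      have := Nat.mul_le_mul_right (k + 1) (Nat.le_of_lt_succ i.isLt)
      omega
    exact ⟨e ⟨i * (k + 1), hi⟩, (hmem _ _).2 (Nat.mul_div_cancel _ k.succ_pos)⟩
  · rw [← preimage_iUnion, iUnion_of_singleton, preimage_univ]
  · refine Metric.diam_le_of_forall_dist_le (by positivity) fun x hx y hy => ?_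
    obtain ⟨j, rfl⟩ := e.surjective x
    obtain ⟨j', rfl⟩ := e.surjective y
    rw [hmem] at hx hy
    wlog hle : j' ≤ j generalizing j j'
    · rw [dist_comm]; exact this j' hy j hx (le_of_not_ge hle)
    rw [dist_finEquiv hm hle]
    gcongr
    exact (min_le_left _ _).trans (Nat.sub_le_of_div_eq_div (hx.trans hy.symm))
  · have hk0 : (⟨0, hm⟩ : Fin m) ≤ ⟨k, by omega⟩ := Nat.zero_le k
    refine le_ciSup_of_le (f := fun i => Metric.diam (X i)) (Finite.bddAbove_range _) 0 ?_
    calc (k : ℝ) * (2 * π / m) = dist (e ⟨k, by omega⟩) (e ⟨0, hm⟩) := by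
          rw [dist_finEquiv hm hk0]
          congr 2
          dsimp only
          omega
      _ ≤ Metric.diam (X 0) :=
          Metric.dist_le_diam_of_mem (X 0).toFinite.isBounded
            ((hmem _ _).2 (Nat.div_eq_of_lt k.lt_succ_self)) ((hmem _ _).2 (Nat.zero_div _))

end Pvert

theorem stmt10 (m : ℕ) (hm : 5 ≤ m) (hmod : m % 3 = 2) :
    (∀ X : Fin 3 → Set (Pvert m), (∀ i, (X i).Nonempty) →
      Pairwise (Function.onFun Disjoint X) → (⋃ i, X i) = Set.univ →
      (2 * π / 3 - 4 * π / (3 * m)) ≤ ⨆ i, Metric.diam (X i)) ∧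
    (∃ X : Fin 3 → Set (Pvert m), (∀ i, (X i).Nonempty) ∧
      Pairwise (Function.onFun Disjoint X) ∧ (⋃ i, X i) = Set.univ ∧
      (⨆ i, Metric.diam (X i)) = (2 * π / 3 - 4 * π / (3 * m))) := by
  set k := m / 3
  have hmk : m = 3 * k + 2 := by omega
  have hbound : 2 * π / 3 - 4 * π / (3 * m) = k * (2 * π / m) := by
    have hmk' : (m : ℝ) = 3 * k + 2 := by exact_mod_cast hmk
    field_simp
    rw [hmk']
    ring
  rw [hbound]
  exact ⟨fun X _ _ hX => Pvert.div_mul_le_iSup_diam (by omega) X hX,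
    Pvert.exists_partition_iSup_diam_eq hmk (by omega)⟩
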